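/- arXiv:2507.04022 — 4 statements merged into one kernel-verified Lean document; each statement's English description precedes it below -/
import Mathlib

section
/- For every integer d ≥ 2 and every vector x ∈ ℝ^d with pairwise distinct coordinates, ∑_{m=1}^{d} ( ∑_{k ≠ m} 1/(x_m − x_k) )² = 2 ∑_{d ≥ m > k ≥ 1} 1/(x_m − x_k)². -/
/-- For every integer `d ≥ 2` and every vector `x ∈ ℝ^d` with pairwise distinct
coordinates, `∑_{m} (∑_{k ≠ m} 1/(x_m − x_k))² = 2 ∑_{m > k} 1/(x_m − x_k)²`. -/
theorem sum_sq_inner_sums_eq (d : ℕ) (hd : 2 ≤ d) (x : Fin d → ℝ)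
    (hx : Function.Injective x) :
    ∑ m : Fin d, (∑ k ∈ Finset.univ.filter (fun k => k ≠ m), 1 / (x m - x k)) ^ 2
      = 2 * ∑ m : Fin d, ∑ k ∈ Finset.univ.filter (fun k => k < m),
          1 / (x m - x k) ^ 2 := by
  classical
  have hne : ∀ {m k : Fin d}, m ≠ k → x m - x k ≠ 0 :=
    fun {m k} h => sub_ne_zero.mpr (fun e => h (hx e))
  set f : Fin d → Fin d → ℝ := fun m k => 1 / (x m - x k) with hfdef
  set G : Fin d × Fin d × Fin d → ℝ :=
    fun t => if t.1 ≠ t.2.1 ∧ t.1 ≠ t.2.2 ∧ t.2.1 ≠ t.2.2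
      then f t.1 t.2.1 * f t.1 t.2.2 else 0 with hGdef
  set σ : Fin d × Fin d × Fin d ≃ Fin d × Fin d × Fin d :=
    { toFun := fun t => (t.2.1, t.2.2, t.1)
      invFun := fun t => (t.2.2, t.1, t.2.1)
      left_inv := fun t => rfl
      right_inv := fun t => rfl } with hσdef
  have hσ1 : ∑ t : Fin d × Fin d × Fin d, G (σ t) = ∑ t, G t :=
    Fintype.sum_equiv σ _ _ (fun t => rfl)
  have hσ2 : ∑ t : Fin d × Fin d × Fin d, G (σ (σ t)) = ∑ t, G t := by
    have := Fintype.sum_equiv σ (fun t => G (σ (σ t))) (fun t => G (σ t)) (fun t => rfl)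
    rw [this, hσ1]
  -- pointwise three-term identity
  have hpt : ∀ t : Fin d × Fin d × Fin d, G t + G (σ t) + G (σ (σ t)) = 0 := by
    rintro ⟨m, k, j⟩
    simp only [hGdef, hσdef, Equiv.coe_fn_mk]
    by_cases h : m ≠ k ∧ m ≠ j ∧ k ≠ j
    · obtain ⟨h1, h2, h3⟩ := h
      rw [if_pos ⟨h1, h2, h3⟩, if_pos ⟨h3, h1.symm, h2.symm⟩,
        if_pos ⟨h2.symm, h3.symm, h1⟩]
      have e1 := hne h1
      have e2 := hne h2
      have e3 := hne h3
      have e1' := hne h1.symm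
      have e2' := hne h2.symm
      have e3' := hne h3.symm
      simp only [hfdef]
      field_simp
      ring
    · push_neg at h
      by_cases h1 : m = k
      · simp [h1]
      by_cases h2 : m = j
      · simp [h2]
      have h3 := h h1 h2
      simp [h1, h2, h3, Ne.symm h1, Ne.symm h2]
  have hT : ∑ t : Fin d × Fin d × Fin d, G t = 0 := by
    have h3T : (3 : ℝ) * ∑ t : Fin d × Fin d × Fin d, G t = 0 := by
      calc (3 : ℝ) * ∑ t : Fin d × Fin d × Fin d, G t
          = (∑ t, G t) + (∑ t, G (σ t)) + (∑ t, G (σ (σ t))) := by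
            rw [hσ1, hσ2]; ring
        _ = ∑ t : Fin d × Fin d × Fin d, (G t + G (σ t) + G (σ (σ t))) := by
            rw [Finset.sum_add_distrib, Finset.sum_add_distrib]
        _ = 0 := by simp [hpt]
    linarith
  -- expand the square
  have expand : ∀ m : Fin d,
      (∑ k ∈ Finset.univ.filter (fun k => k ≠ m), f m k) ^ 2
      = (∑ k ∈ Finset.univ.filter (fun k => k ≠ m), f m k ^ 2)
        + ∑ k ∈ Finset.univ.filter (fun k => k ≠ m),
            ∑ j ∈ (Finset.univ.filter (fun j => j ≠ m)).erase k,
              f m k * f m j := by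
    intro m
    rw [sq, Finset.sum_mul_sum]
    rw [← Finset.sum_add_distrib]
    refine Finset.sum_congr rfl (fun k hk => ?_)
    rw [← Finset.add_sum_erase _ _ hk, sq]
  -- identify the cross term with the triple sum
  have cross : (∑ m : Fin d, ∑ k ∈ Finset.univ.filter (fun k => k ≠ m),
        ∑ j ∈ (Finset.univ.filter (fun j => j ≠ m)).erase k,
          f m k * f m j)
      = ∑ t : Fin d × Fin d × Fin d, G t := by
    rw [Fintype.sum_prod_type]
    refine Finset.sum_congr rfl (fun m _ => ?_)
    rw [Fintype.sum_prod_type, Finset.sum_filter]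
    refine Finset.sum_congr rfl (fun k _ => ?_)
    by_cases hk : k ≠ m
    · rw [if_pos hk]
      have hset : (Finset.univ.filter (fun j : Fin d => j ≠ m)).erase k
          = Finset.univ.filter (fun j : Fin d => m ≠ j ∧ k ≠ j) := by
        ext j
        simp only [Finset.mem_erase, Finset.mem_filter, Finset.mem_univ, true_and]
        constructor
        · rintro ⟨h1, h2⟩; exact ⟨Ne.symm h2, Ne.symm h1⟩
        · rintro ⟨h1, h2⟩; exact ⟨Ne.symm h2, Ne.symm h1⟩
      rw [hset, Finset.sum_filter]
      refine Finset.sum_congr rfl (fun j _ => ?_)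
      simp only [hGdef]
      by_cases hj : m ≠ j ∧ k ≠ j
      · rw [if_pos hj, if_pos ⟨Ne.symm hk, hj.1, hj.2⟩]
      · rw [if_neg hj, if_neg]
        intro hcon
        exact hj ⟨hcon.2.1, hcon.2.2⟩
    · push_neg at hk
      rw [if_neg (by simp [hk])]
      subst hk
      simp [hGdef]
  -- diagonal term
  have hsymm : ∀ m k : Fin d, f m k ^ 2 = 1 / (x m - x k) ^ 2 := by
    intro m k
    simp only [hfdef, div_pow, one_pow]
  have diag : (∑ m : Fin d, ∑ k ∈ Finset.univ.filter (fun k => k ≠ m), f m k ^ 2)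
      = 2 * ∑ m : Fin d, ∑ k ∈ Finset.univ.filter (fun k => k < m),
          1 / (x m - x k) ^ 2 := by
    have hsplit : ∀ m : Fin d,
        ∑ k ∈ Finset.univ.filter (fun k => k ≠ m), f m k ^ 2
        = (∑ k ∈ Finset.univ.filter (fun k => k < m), f m k ^ 2)
          + ∑ k ∈ Finset.univ.filter (fun k => m < k), f m k ^ 2 := by
      intro m
      rw [← Finset.sum_union]
      · apply Finset.sum_congr _ (fun _ _ => rfl)
        ext k
        simp only [Finset.mem_filter, Finset.mem_univ, true_and, Finset.mem_union]
        exact ne_iff_lt_or_gt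
      · rw [Finset.disjoint_left]
        intro a ha hb
        simp only [Finset.mem_filter, Finset.mem_univ, true_and] at ha hb
        exact absurd (ha.trans hb) (lt_irrefl a)
    have hswap : (∑ m : Fin d, ∑ k ∈ Finset.univ.filter (fun k => m < k), f m k ^ 2)
        = ∑ m : Fin d, ∑ k ∈ Finset.univ.filter (fun k => k < m), f m k ^ 2 := by
      rw [Finset.sum_comm' (s' := fun k => Finset.univ.filter (fun m => m < k))
        (t' := Finset.univ)]
      · refine Finset.sum_congr rfl (fun m _ => ?_)
        refine Finset.sum_congr rfl (fun k hk => ?_)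
        have h2 : (x k - x m) ^ 2 = (x m - x k) ^ 2 := by ring
        show (1 / (x k - x m)) ^ 2 = (1 / (x m - x k)) ^ 2
        rw [div_pow, div_pow, h2]
      · intro a b
        simp [and_comm]
    simp only [hsplit, Finset.sum_add_distrib, hswap, ← hsymm]
    ring
  calc ∑ m : Fin d, (∑ k ∈ Finset.univ.filter (fun k => k ≠ m), 1 / (x m - x k)) ^ 2
      = ∑ m : Fin d, ((∑ k ∈ Finset.univ.filter (fun k => k ≠ m), f m k ^ 2)
        + ∑ k ∈ Finset.univ.filter (fun k => k ≠ m),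
            ∑ j ∈ (Finset.univ.filter (fun j => j ≠ m)).erase k,
              f m k * f m j) := Finset.sum_congr rfl (fun m _ => expand m)
    _ = (∑ m : Fin d, ∑ k ∈ Finset.univ.filter (fun k => k ≠ m), f m k ^ 2)
        + ∑ m : Fin d, ∑ k ∈ Finset.univ.filter (fun k => k ≠ m),
            ∑ j ∈ (Finset.univ.filter (fun j => j ≠ m)).erase k,
              f m k * f m j := Finset.sum_add_distrib
    _ = (∑ m : Fin d, ∑ k ∈ Finset.univ.filter (fun k => k ≠ m), f m k ^ 2) + 0 := by
        rw [cross, hT]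
    _ = 2 * ∑ m : Fin d, ∑ k ∈ Finset.univ.filter (fun k => k < m),
          1 / (x m - x k) ^ 2 := by rw [add_zero, diag]
end

section
/- Let d ≥ 2, let x ∈ ℝ^d have pairwise distinct coordinates, let S ≥ 0, and let s_1, …, s_d be real numbers with s_m² ≤ S² for every m. Then ∑_{m=1}^{d} s_m² ( ∑_{k ≠ m} 1/(x_m − x_k) )² ≤ 2 S² ∑_{d ≥ m > k ≥ 1} 1/(x_m − x_k)². -/
open Finset

-- classical three-term identity
private lemma three_term_aux (a b c : ℝ) (hab : a ≠ b) (hac : a ≠ c) (hbc : b ≠ c) :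
    1/(a-b) * (1/(a-c)) + 1/(b-c) * (1/(b-a)) + 1/(c-a) * (1/(c-b)) = 0 := by
  have h1 : a - b ≠ 0 := sub_ne_zero.mpr hab
  have h2 : a - c ≠ 0 := sub_ne_zero.mpr hac
  have h3 : b - c ≠ 0 := sub_ne_zero.mpr hbc
  have h4 : b - a ≠ 0 := sub_ne_zero.mpr hab.symm
  have h5 : c - a ≠ 0 := sub_ne_zero.mpr hac.symm
  have h6 : c - b ≠ 0 := sub_ne_zero.mpr hbc.symm
  field_simp
  ring

private lemma triple_sum_zero_aux (d : ℕ) (x : Fin d → ℝ) (hx : Function.Injective x) :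
    ∑ p ∈ Finset.univ.filter (fun p : Fin d × Fin d × Fin d =>
        p.2.1 ≠ p.1 ∧ p.2.2 ≠ p.1 ∧ p.2.2 ≠ p.2.1),
      (1/(x p.1 - x p.2.1)) * (1/(x p.1 - x p.2.2)) = 0 := by
  set t : Fin d × Fin d × Fin d → ℝ :=
    fun p => (1/(x p.1 - x p.2.1)) * (1/(x p.1 - x p.2.2)) with ht
  set D : Finset (Fin d × Fin d × Fin d) := Finset.univ.filter (fun p =>
      p.2.1 ≠ p.1 ∧ p.2.2 ≠ p.1 ∧ p.2.2 ≠ p.2.1) with hD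
  let e : (Fin d × Fin d × Fin d) ≃ (Fin d × Fin d × Fin d) :=
    ⟨fun p => (p.2.1, p.2.2, p.1), fun p => (p.2.2, p.1, p.2.1),
      fun p => rfl, fun p => rfl⟩
  have hmem : ∀ p : Fin d × Fin d × Fin d, p ∈ D ↔ e p ∈ D := by
    intro p
    simp only [hD, Finset.mem_filter, Finset.mem_univ, true_and, e, Equiv.coe_fn_mk]
    constructor
    · rintro ⟨h1, h2, h3⟩; exact ⟨h3, h1.symm, h2.symm⟩
    · rintro ⟨h1, h2, h3⟩; exact ⟨h2.symm, h3.symm, h1⟩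
  have he1 : ∑ p ∈ D, t (e p) = ∑ p ∈ D, t p :=
    Finset.sum_equiv e hmem (fun p _ => rfl)
  have he2 : ∑ p ∈ D, t (e (e p)) = ∑ p ∈ D, t (e p) :=
    Finset.sum_equiv e hmem (fun p _ => rfl)
  have hzero : ∑ p ∈ D, (t p + t (e p) + t (e (e p))) = 0 := by
    apply Finset.sum_eq_zero
    intro p hp
    rw [hD, Finset.mem_filter] at hp
    obtain ⟨-, h1, h2, h3⟩ := hp
    have := three_term_aux (x p.1) (x p.2.1) (x p.2.2)
      (hx.ne h1.symm) (hx.ne h2.symm) (hx.ne h3.symm)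
    simpa [t, e] using this
  rw [Finset.sum_add_distrib, Finset.sum_add_distrib, he1, he2, he1] at hzero
  linarith

private lemma expand_aux (d : ℕ) (x : Fin d → ℝ) (hx : Function.Injective x) :
    ∑ m : Fin d, (∑ k ∈ Finset.univ.filter (fun k => k ≠ m), 1/(x m - x k))^2
      = ∑ m : Fin d, ∑ k ∈ Finset.univ.filter (fun k => k ≠ m), (1/(x m - x k))^2 := by
  have key : ∀ m : Fin d,
      (∑ k ∈ Finset.univ.filter (fun k => k ≠ m), 1/(x m - x k))^2
        = (∑ k ∈ Finset.univ.filter (fun k => k ≠ m), (1/(x m - x k))^2)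
          + ∑ k ∈ Finset.univ.filter (fun k => k ≠ m),
              ∑ j ∈ (Finset.univ.filter (fun k => k ≠ m)).erase k,
                (1/(x m - x k)) * (1/(x m - x j)) := by
    intro m
    rw [sq, Finset.sum_mul_sum, ← Finset.sum_add_distrib]
    refine Finset.sum_congr rfl fun k hk => ?_
    rw [sq, ← Finset.add_sum_erase _ (fun j => (1/(x m - x k)) * (1/(x m - x j))) hk]
  simp only [key, Finset.sum_add_distrib]
  have htriple : ∑ m : Fin d, ∑ k ∈ Finset.univ.filter (fun k => k ≠ m),
      ∑ j ∈ (Finset.univ.filter (fun k => k ≠ m)).erase k,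
        (1/(x m - x k)) * (1/(x m - x j)) = 0 := by
    rw [← triple_sum_zero_aux d x hx]
    rw [Finset.sum_filter, Fintype.sum_prod_type]
    refine Finset.sum_congr rfl fun m _ => ?_
    rw [Fintype.sum_prod_type]
    rw [Finset.sum_filter]
    refine Finset.sum_congr rfl fun k _ => ?_
    rw [← Finset.filter_ne', Finset.sum_filter, Finset.sum_filter]
    by_cases hkm : k ≠ m
    · simp only [if_pos hkm]
      refine Finset.sum_congr rfl fun j _ => ?_
      split_ifs <;> tauto
    · simp only [if_neg hkm]
      rw [eq_comm]
      apply Finset.sum_eq_zero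
      intro j _
      split_ifs <;> tauto
  rw [htriple, add_zero]

private lemma sym_split_aux (d : ℕ) (x : Fin d → ℝ) :
    ∑ m : Fin d, ∑ k ∈ Finset.univ.filter (fun k => k ≠ m), (1/(x m - x k))^2
      = 2 * ∑ m : Fin d, ∑ k ∈ Finset.univ.filter (fun k => k < m), 1/(x m - x k)^2 := by
  have hq : ∀ m k : Fin d, (1/(x m - x k))^2 = 1/(x m - x k)^2 := by
    intro m k; rw [div_pow, one_pow]
  have hqs : ∀ m k : Fin d, 1/(x m - x k)^2 = 1/(x k - x m)^2 := by
    intro m k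
    rw [show (x m - x k)^2 = (x k - x m)^2 by ring]
  simp only [hq, Finset.sum_filter]
  have split : ∀ m k : Fin d, (if k ≠ m then 1/(x m - x k)^2 else 0)
      = (if k < m then 1/(x m - x k)^2 else 0) + (if m < k then 1/(x m - x k)^2 else 0) := by
    intro m k
    rcases lt_trichotomy k m with h | h | h
    · simp [h, h.ne, lt_asymm h]
    · subst h; simp
    · simp [h, h.ne', lt_asymm h]
  simp only [split, Finset.sum_add_distrib]
  have hswap : ∑ m : Fin d, ∑ k : Fin d, (if m < k then 1/(x m - x k)^2 else 0)
      = ∑ m : Fin d, ∑ k : Fin d, (if k < m then 1/(x m - x k)^2 else 0) := by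
    rw [Finset.sum_comm]
    refine Finset.sum_congr rfl fun m _ => Finset.sum_congr rfl fun k _ => ?_
    rw [hqs]
  rw [hswap]; ring

/-- Let `d ≥ 2`, let `x ∈ ℝ^d` have pairwise distinct coordinates, let `S ≥ 0`,
and let `s_1, …, s_d` be reals with `s_m² ≤ S²` for every `m`.  Then
`∑_m s_m² (∑_{k ≠ m} 1/(x_m − x_k))² ≤ 2 S² ∑_{m > k} 1/(x_m − x_k)²`. -/
theorem weighted_sum_sq_le (d : ℕ) (hd : 2 ≤ d) (x : Fin d → ℝ)
    (hx : Function.Injective x) (S : ℝ) (hS : 0 ≤ S) (s : Fin d → ℝ)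
    (hs : ∀ m, s m ^ 2 ≤ S ^ 2) :
    ∑ m : Fin d,
        s m ^ 2 * (∑ k ∈ Finset.univ.filter (fun k => k ≠ m), 1 / (x m - x k)) ^ 2
      ≤ 2 * S ^ 2 * ∑ m : Fin d, ∑ k ∈ Finset.univ.filter (fun k => k < m),
          1 / (x m - x k) ^ 2 := by
  have h1 : ∑ m : Fin d,
      s m ^ 2 * (∑ k ∈ Finset.univ.filter (fun k => k ≠ m), 1 / (x m - x k)) ^ 2
      ≤ ∑ m : Fin d,
      S ^ 2 * (∑ k ∈ Finset.univ.filter (fun k => k ≠ m), 1 / (x m - x k)) ^ 2 :=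
    Finset.sum_le_sum fun m _ => mul_le_mul_of_nonneg_right (hs m) (sq_nonneg _)
  calc _ ≤ _ := h1
    _ = S ^ 2 * ∑ m : Fin d,
        (∑ k ∈ Finset.univ.filter (fun k => k ≠ m), 1 / (x m - x k)) ^ 2 := by
        rw [Finset.mul_sum]
    _ = _ := by rw [expand_aux d x hx, sym_split_aux d x]; ring
end

section
/- Let d ≥ 2, let λ > 0, S > 0 and p > 0 satisfy (6p + 1)·S² ≤ 2λ. Let x ∈ ℝ^d have pairwise distinct coordinates and let s_1, …, s_d be real numbers with s_m² ≤ S² for every m. Then 6p² ∑_{m=1}^{d} s_m² ( ∑_{k ≠ m} 1/(x_m − x_k) )² ≤ ∑_{d ≥ m > k ≥ 1} 2p·(2λ − (s_m² + s_k²)/2) / (x_m − x_k)². -/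
open Finset

lemma triple_zero {d : ℕ} (x : Fin d → ℝ) (hx : Function.Injective x) :
    ∑ t ∈ Finset.univ.filter
        (fun t : Fin d × Fin d × Fin d => t.2.1 ≠ t.1 ∧ t.2.2 ≠ t.1 ∧ t.2.2 ≠ t.2.1),
      (1 / (x t.1 - x t.2.1)) * (1 / (x t.1 - x t.2.2)) = 0 := by
  classical
  set D := Finset.univ.filter
      (fun t : Fin d × Fin d × Fin d => t.2.1 ≠ t.1 ∧ t.2.2 ≠ t.1 ∧ t.2.2 ≠ t.2.1) with hD
  set g : Fin d × Fin d × Fin d → ℝ :=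
    fun t => (1 / (x t.1 - x t.2.1)) * (1 / (x t.1 - x t.2.2)) with hg
  have hmem : ∀ t : Fin d × Fin d × Fin d, t ∈ D ↔
      (t.2.1 ≠ t.1 ∧ t.2.2 ≠ t.1 ∧ t.2.2 ≠ t.2.1) := by
    intro t; simp [hD]
  have h1 : ∑ t ∈ D, g (t.2.1, t.2.2, t.1) = ∑ t ∈ D, g t := by
    apply Finset.sum_nbij' (i := fun t => (t.2.1, t.2.2, t.1))
      (j := fun t => (t.2.2, t.1, t.2.1))
    · intro a ha; rw [hmem] at *; obtain ⟨h1, h2, h3⟩ := ha; exact ⟨h3, fun h => h1 h.symm, fun h => h2 h.symm⟩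
    · intro a ha; rw [hmem] at *; obtain ⟨h1, h2, h3⟩ := ha; exact ⟨fun h => h2 h.symm, fun h => h3 h.symm, h1⟩
    · intro a _; rfl
    · intro a _; rfl
    · intro a _; rfl
  have h2 : ∑ t ∈ D, g (t.2.2, t.1, t.2.1) = ∑ t ∈ D, g t := by
    apply Finset.sum_nbij' (i := fun t => (t.2.2, t.1, t.2.1))
      (j := fun t => (t.2.1, t.2.2, t.1))
    · intro a ha; rw [hmem] at *; obtain ⟨h1, h2, h3⟩ := ha; exact ⟨fun h => h2 h.symm, fun h => h3 h.symm, h1⟩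
    · intro a ha; rw [hmem] at *; obtain ⟨h1, h2, h3⟩ := ha; exact ⟨h3, fun h => h1 h.symm, fun h => h2 h.symm⟩
    · intro a _; rfl
    · intro a _; rfl
    · intro a _; rfl
  have hzero : ∑ t ∈ D, (g t + g (t.2.1, t.2.2, t.1) + g (t.2.2, t.1, t.2.1)) = 0 := by
    apply Finset.sum_eq_zero
    intro t ht
    rw [hmem] at ht
    obtain ⟨h1, h2, h3⟩ := ht
    have e1 : x t.1 - x t.2.1 ≠ 0 := sub_ne_zero.mpr (fun e => h1 (hx e.symm))
    have e2 : x t.1 - x t.2.2 ≠ 0 := sub_ne_zero.mpr (fun e => h2 (hx e.symm))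
    have e3 : x t.2.1 - x t.2.2 ≠ 0 := sub_ne_zero.mpr (fun e => h3 (hx e.symm))
    have e1' : x t.2.1 - x t.1 ≠ 0 := fun h => e1 (by linarith [sub_eq_zero.mp h])
    have e2' : x t.2.2 - x t.1 ≠ 0 := fun h => e2 (by linarith [sub_eq_zero.mp h])
    have e3' : x t.2.2 - x t.2.1 ≠ 0 := fun h => e3 (by linarith [sub_eq_zero.mp h])
    simp only [hg]
    field_simp
    ring
  rw [Finset.sum_add_distrib, Finset.sum_add_distrib, h1, h2] at hzero
  linarith

lemma sq_identity {d : ℕ} (x : Fin d → ℝ) (hx : Function.Injective x) :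
    ∑ m : Fin d, (∑ k ∈ Finset.univ.filter (fun k => k ≠ m), 1 / (x m - x k)) ^ 2
      = ∑ m : Fin d, ∑ k ∈ Finset.univ.filter (fun k => k ≠ m), (1 / (x m - x k)) ^ 2 := by
  classical
  have herase : ∀ m k : Fin d, (Finset.univ.filter (fun l => l ≠ m)).erase k
      = Finset.univ.filter (fun l => l ≠ m ∧ l ≠ k) := by
    intro m k; ext a; simp [Finset.mem_erase, and_comm]
  have hexp : ∀ m : Fin d,
      (∑ k ∈ Finset.univ.filter (fun k => k ≠ m), 1 / (x m - x k)) ^ 2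
      = ∑ k ∈ Finset.univ.filter (fun k => k ≠ m), (1 / (x m - x k)) ^ 2
        + ∑ k ∈ Finset.univ.filter (fun k => k ≠ m),
            ∑ l ∈ Finset.univ.filter (fun l => l ≠ m ∧ l ≠ k),
              (1 / (x m - x k)) * (1 / (x m - x l)) := by
    intro m
    rw [sq, Finset.sum_mul_sum, ← Finset.sum_add_distrib]
    apply Finset.sum_congr rfl
    intro k hk
    rw [← herase, ← Finset.add_sum_erase _ _ hk, ← sq]
  rw [Finset.sum_congr rfl (fun m _ => hexp m), Finset.sum_add_distrib]
  have hcross : ∑ m : Fin d, ∑ k ∈ Finset.univ.filter (fun k => k ≠ m),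
      ∑ l ∈ Finset.univ.filter (fun l => l ≠ m ∧ l ≠ k),
        (1 / (x m - x k)) * (1 / (x m - x l)) = 0 := by
    have := triple_zero x hx
    rw [Finset.sum_filter, Fintype.sum_prod_type] at this
    convert this using 2 with m _
    rw [Fintype.sum_prod_type, Finset.sum_filter]
    apply Finset.sum_congr rfl
    intro k _
    dsimp only
    by_cases hkm : k ≠ m
    · simp [Finset.sum_filter, hkm]
    · push_neg at hkm
      subst hkm
      simp
  rw [hcross, add_zero]

lemma double_sym {d : ℕ} (x : Fin d → ℝ) :
    ∑ m : Fin d, ∑ k ∈ Finset.univ.filter (fun k => k ≠ m), (1 / (x m - x k)) ^ 2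
      = 2 * ∑ m : Fin d, ∑ k ∈ Finset.univ.filter (fun k => k < m), (1 / (x m - x k)) ^ 2 := by
  classical
  have hsplit : ∀ m : Fin d, Finset.univ.filter (fun k => k ≠ m)
      = Finset.univ.filter (fun k => k < m) ∪ Finset.univ.filter (fun k => m < k) := by
    intro m; ext a
    simp only [Finset.mem_filter, Finset.mem_univ, true_and, Finset.mem_union]
    constructor
    · intro h; exact lt_or_gt_of_ne h
    · rintro (h | h); exacts [ne_of_lt h, ne_of_gt h]
  have hdisj : ∀ m : Fin d, Disjoint (Finset.univ.filter (fun k => k < m))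
      (Finset.univ.filter (fun k => m < k)) := by
    intro m
    simp only [Finset.disjoint_left, Finset.mem_filter, Finset.mem_univ, true_and]
    intro a h1 h2
    exact absurd (lt_trans h1 h2) (lt_irrefl a)
  have hswap : ∑ m : Fin d, ∑ k ∈ Finset.univ.filter (fun k => m < k), (1 / (x m - x k)) ^ 2
      = ∑ m : Fin d, ∑ k ∈ Finset.univ.filter (fun k => k < m), (1 / (x m - x k)) ^ 2 := by
    rw [Finset.sum_comm' (t' := Finset.univ) (s' := fun k => Finset.univ.filter (fun m => m < k))
      (by intro m k; simp [and_comm])]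
    apply Finset.sum_congr rfl
    intro m _
    apply Finset.sum_congr rfl
    intro k _
    rw [div_pow, div_pow, show (x k - x m)^2 = (x m - x k)^2 from by ring]
  calc ∑ m : Fin d, ∑ k ∈ Finset.univ.filter (fun k => k ≠ m), (1 / (x m - x k)) ^ 2
      = ∑ m : Fin d, (∑ k ∈ Finset.univ.filter (fun k => k < m), (1 / (x m - x k)) ^ 2
        + ∑ k ∈ Finset.univ.filter (fun k => m < k), (1 / (x m - x k)) ^ 2) := by
        apply Finset.sum_congr rfl; intro m _; rw [hsplit m, Finset.sum_union (hdisj m)]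
    _ = _ := by rw [Finset.sum_add_distrib, hswap]; ring

/-- Let `d ≥ 2`, let `λ > 0`, `S > 0`, `p > 0` satisfy `(6p + 1)·S² ≤ 2λ`.
Let `x ∈ ℝ^d` have pairwise distinct coordinates and `s_m² ≤ S²` for every `m`.
Then `6p² ∑_m s_m² (∑_{k ≠ m} 1/(x_m − x_k))²
  ≤ ∑_{m > k} 2p·(2λ − (s_m² + s_k²)/2)/(x_m − x_k)²`. -/
theorem key_quadratic_variation_estimate (d : ℕ) (hd : 2 ≤ d)
    (lam S p : ℝ) (hlam : 0 < lam) (hS : 0 < S) (hp : 0 < p)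
    (hcond : (6 * p + 1) * S ^ 2 ≤ 2 * lam)
    (x : Fin d → ℝ) (hx : Function.Injective x)
    (s : Fin d → ℝ) (hs : ∀ m, s m ^ 2 ≤ S ^ 2) :
    6 * p ^ 2 * ∑ m : Fin d,
        s m ^ 2 * (∑ k ∈ Finset.univ.filter (fun k => k ≠ m), 1 / (x m - x k)) ^ 2
      ≤ ∑ m : Fin d, ∑ k ∈ Finset.univ.filter (fun k => k < m),
          2 * p * (2 * lam - (s m ^ 2 + s k ^ 2) / 2) / (x m - x k) ^ 2 := by
  classical
  have step1 : 6 * p ^ 2 * ∑ m : Fin d,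
      s m ^ 2 * (∑ k ∈ Finset.univ.filter (fun k => k ≠ m), 1 / (x m - x k)) ^ 2
      ≤ 6 * p ^ 2 * S ^ 2 * ∑ m : Fin d,
        (∑ k ∈ Finset.univ.filter (fun k => k ≠ m), 1 / (x m - x k)) ^ 2 := by
    have h : ∑ m : Fin d,
        s m ^ 2 * (∑ k ∈ Finset.univ.filter (fun k => k ≠ m), 1 / (x m - x k)) ^ 2
        ≤ S ^ 2 * ∑ m : Fin d,
          (∑ k ∈ Finset.univ.filter (fun k => k ≠ m), 1 / (x m - x k)) ^ 2 := by
      rw [Finset.mul_sum]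
      exact Finset.sum_le_sum fun m _ => mul_le_mul_of_nonneg_right (hs m) (sq_nonneg _)
    calc 6 * p ^ 2 * ∑ m : Fin d,
        s m ^ 2 * (∑ k ∈ Finset.univ.filter (fun k => k ≠ m), 1 / (x m - x k)) ^ 2
        ≤ 6 * p ^ 2 * (S ^ 2 * ∑ m : Fin d,
          (∑ k ∈ Finset.univ.filter (fun k => k ≠ m), 1 / (x m - x k)) ^ 2) :=
          mul_le_mul_of_nonneg_left h (by positivity)
      _ = _ := by ring
  have step2 : 6 * p ^ 2 * S ^ 2 * ∑ m : Fin d,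
      (∑ k ∈ Finset.univ.filter (fun k => k ≠ m), 1 / (x m - x k)) ^ 2
      = ∑ m : Fin d, ∑ k ∈ Finset.univ.filter (fun k => k < m),
        12 * p ^ 2 * S ^ 2 * (1 / (x m - x k)) ^ 2 := by
    rw [sq_identity x hx, double_sym x, ← mul_assoc,
      show 6 * p ^ 2 * S ^ 2 * 2 = 12 * p ^ 2 * S ^ 2 from by ring, Finset.mul_sum]
    apply Finset.sum_congr rfl
    intro m _
    rw [Finset.mul_sum]
  refine le_trans step1 (le_of_eq_of_le step2 ?_)
  apply Finset.sum_le_sum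
  intro m _
  apply Finset.sum_le_sum
  intro k hk
  have hkm : k ≠ m := ne_of_lt (Finset.mem_filter.mp hk).2
  have hv : x m - x k ≠ 0 := sub_ne_zero.mpr (fun e => hkm (hx e).symm)
  have hv2 : (0:ℝ) < (x m - x k) ^ 2 := by positivity
  rw [div_pow, one_pow, mul_div_assoc']
  rw [div_le_div_iff₀ hv2 hv2]
  have h1 : s m ^ 2 ≤ S ^ 2 := hs m
  have h2 : s k ^ 2 ≤ S ^ 2 := hs k
  have hkey : 12 * p ^ 2 * S ^ 2 ≤ 2 * p * (2 * lam - (s m ^ 2 + s k ^ 2) / 2) := by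
    nlinarith [mul_le_mul_of_nonneg_left hcond hp.le,
      mul_le_mul_of_nonneg_left h1 hp.le, mul_le_mul_of_nonneg_left h2 hp.le]
  nlinarith [mul_le_mul_of_nonneg_right hkey hv2.le]
end

section
/- Let d ≥ 2, λ > 0, h > 0 and c ∈ ℝ^d. Then there exists a unique x ∈ Δ_d such that for every i ∈ {1,…,d}, x_i − h·λ·∑_{j ≠ i} 1/(x_i − x_j) = c_i. Consequently, each step of the semi-implicit Euler–Maruyama scheme for the non-colliding particle system is well defined and takes values in Δ_d. -/
/-!
Solutions in `Δ_d` are exactly the critical points of the potential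
`Φ(x) = ∑ᵢ (xᵢ - cᵢ)² / 2 - hλ ∑_{i<j} log (xⱼ - xᵢ)` on the open set `Δ_d`. The bound
`log u ≤ u` makes `Φ` grow quadratically at infinity, while the term `-hλ log (x_q - x_p)` of
a single colliding pair drives it to `+∞`; hence a sublevel set of `Φ` is a compact subset of `Δ_d`,
`Φ` attains its minimum on `Δ_d`, and the minimiser solves the equation.

Uniqueness is a comparison principle: if `x, y ∈ Δ_d` solve the equation for `c ≤ c'` and
`xᵢ - yᵢ` is maximal at `i`, then `1 / (xᵢ - xⱼ) ≤ 1 / (yᵢ - yⱼ)` for every `j ≠ i`, so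
`xᵢ - yᵢ ≤ cᵢ - c'ᵢ ≤ 0`.
-/

open Finset Function

theorem Finset.sum_apply_update_of_mem {ι α M : Type*} [DecidableEq ι] [AddCommMonoid M]
    {s : Finset ι} {i : ι} (hi : i ∈ s) (φ : ι → α → M) (x : ι → α) (t : α) :
    ∑ k ∈ s, φ k (update x i t k) = φ i t + ∑ k ∈ s.erase i, φ k (x k) := by
  simp only [apply_update φ x i t, sum_update_of_mem hi, sdiff_singleton_eq_erase]

theorem Finset.sum_le_add_sum_of_le {ι M : Type*} [AddCommMonoid M] [PartialOrder M]
    [IsOrderedAddMonoid M] [DecidableEq ι] {s : Finset ι} {f g : ι → M} {a : ι} (ha : a ∈ s)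
    (hfg : ∀ i ∈ s, f i ≤ g i) (hg : ∀ i ∈ s, 0 ≤ g i) :
    ∑ i ∈ s, f i ≤ f a + ∑ i ∈ s, g i := by
  rw [← add_sum_erase s f ha]
  gcongr
  calc ∑ i ∈ s.erase a, f i ≤ ∑ i ∈ s.erase a, g i :=
        sum_le_sum fun i hi => hfg i (mem_of_mem_erase hi)
    _ ≤ ∑ i ∈ s, g i :=
        sum_le_sum_of_subset_of_nonneg (erase_subset a s) fun i hi _ => hg i hi

theorem Real.log_sub_le_abs_add_abs (a b : ℝ) : Real.log (a - b) ≤ |a| + |b| :=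
  calc Real.log (a - b) = Real.log |a - b| := (Real.log_abs _).symm
    _ ≤ |a - b| := Real.log_le_self (abs_nonneg _)
    _ ≤ |a| + |b| := abs_sub _ _

theorem one_div_le_one_div_of_mul_pos {a b : ℝ} (hab : 0 < a * b) (hba : b ≤ a) :
    1 / a ≤ 1 / b := by
  have key : 1 / a - 1 / b = (b - a) / (a * b) := by
    field_simp [left_ne_zero_of_mul hab.ne', right_ne_zero_of_mul hab.ne']
  linarith [div_nonpos_of_nonpos_of_nonneg (sub_nonpos.2 hba) hab.le]

theorem isOpen_setOf_strictMono {ι : Type*} [Finite ι] [Preorder ι] :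
    IsOpen {x : ι → ℝ | StrictMono x} := by
  simp only [StrictMono, Set.ofPred_forall]
  exact isOpen_iInter_of_finite fun p => isOpen_iInter_of_finite fun q =>
    isOpen_iInter_of_finite fun _ => isOpen_lt (continuous_apply p) (continuous_apply q)

theorem isClosed_setOf_forall_le_sub {ι : Type*} [Preorder ι] (ε : ℝ) :
    IsClosed {x : ι → ℝ | ∀ p q, p < q → ε ≤ x q - x p} := by
  simp only [Set.ofPred_forall]
  exact isClosed_iInter fun p => isClosed_iInter fun q => isClosed_iInter fun _ =>
    isClosed_le continuous_const (by fun_prop)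

theorem exists_isMinOn_of_sublevel_subset {X α : Type*} [TopologicalSpace X] [LinearOrder α]
    [TopologicalSpace α] [ClosedIicTopology α] {f : X → α} {U K : Set X} (hK : IsCompact K)
    (hf : ContinuousOn f K) {x₀ : X} (hx₀ : x₀ ∈ U) (hsub : ∀ x ∈ U, f x ≤ f x₀ → x ∈ K) :
    ∃ x ∈ K, IsMinOn f U x := by
  have hx₀K := hsub x₀ hx₀ le_rfl
  obtain ⟨x, hxK, hmin⟩ := hK.exists_isMinOn ⟨x₀, hx₀K⟩ hf
  refine ⟨x, hxK, fun y hy => ?_⟩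
  by_cases hy₀ : f y ≤ f x₀
  · exact hmin (hsub y hy hy₀)
  · exact (hmin hx₀K).trans (le_of_not_ge hy₀)

theorem IsLocalMin.hasDerivAt_update_eq_zero {ι : Type*} [DecidableEq ι]
    {f : (ι → ℝ) → ℝ} {x : ι → ℝ} (hf : IsLocalMin f x) (i : ι) {f' : ℝ}
    (hd : HasDerivAt (fun t => f (update x i t)) f' (x i)) : f' = 0 := by
  rw [← update_eq_self i x] at hf
  exact (hf.comp_continuous (continuous_const.update i continuous_id).continuousAt).hasDerivAt_eq_zero hd

theorem one_div_sub_le_one_div_sub {ι : Type*} [LinearOrder ι] {x y : ι → ℝ} (hx : StrictMono x)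
    (hy : StrictMono y) {i j : ι} (hij : j ≠ i) (hmax : x j - y j ≤ x i - y i) :
    1 / (x i - x j) ≤ 1 / (y i - y j) := by
  refine one_div_le_one_div_of_mul_pos ?_ (by linarith)
  rcases hij.lt_or_gt with hji | hij
  · exact mul_pos (sub_pos.2 (hx hji)) (sub_pos.2 (hy hji))
  · exact mul_pos_of_neg_of_neg (sub_neg.2 (hx hij)) (sub_neg.2 (hy hij))

section Potential

variable {ι : Type*} [Fintype ι] [DecidableEq ι]

/-- Since `Real.log u = Real.log |u|`, every unordered pair is counted twice. -/
noncomputable def pairLogEnergy (x : ι → ℝ) : ℝ :=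
  ∑ i, ∑ j ∈ univ.erase i, Real.log (x i - x j)

noncomputable def stepPotential (κ : ℝ) (c x : ι → ℝ) : ℝ :=
  ∑ i, (x i - c i) ^ 2 / 2 - κ / 2 * pairLogEnergy x

theorem pairLogEnergy_update (x : ι → ℝ) (i : ι) (t : ℝ) :
    pairLogEnergy (update x i t) = 2 * ∑ j ∈ univ.erase i, Real.log (t - x j) +
      ∑ k ∈ univ.erase i, ∑ j ∈ (univ.erase k).erase i, Real.log (x k - x j) := by
  have hrow : ∀ k ∈ univ.erase i,
      ∑ j ∈ univ.erase k, Real.log (update x i t k - update x i t j) =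
        Real.log (t - x k) + ∑ j ∈ (univ.erase k).erase i, Real.log (x k - x j) := by
    intro k hk
    have hik : i ∈ univ.erase k := mem_erase.2 ⟨(ne_of_mem_erase hk).symm, mem_univ i⟩
    rw [update_of_ne (ne_of_mem_erase hk),
      sum_apply_update_of_mem hik (fun _ y => Real.log (x k - y)), ← neg_sub,
      Real.log_neg_eq_log]
  have hcol : ∑ j ∈ univ.erase i, Real.log (t - update x i t j) =
      ∑ j ∈ univ.erase i, Real.log (t - x j) :=
    sum_congr rfl fun j hj => by rw [update_of_ne (ne_of_mem_erase hj)]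
  rw [pairLogEnergy, ← add_sum_erase _ _ (mem_univ i), sum_congr rfl hrow, sum_add_distrib,
    update_self, hcol]
  ring

theorem hasDerivAt_stepPotential_update (κ : ℝ) (c : ι → ℝ) {x : ι → ℝ} (hx : Injective x)
    (i : ι) :
    HasDerivAt (fun t => stepPotential κ c (update x i t))
      (x i - c i - κ * ∑ j ∈ univ.erase i, 1 / (x i - x j)) (x i) := by
  have hsq : HasDerivAt (fun t => (t - c i) ^ 2 / 2) (x i - c i) (x i) := by
    refine ((((hasDerivAt_id' (x i)).sub_const (c i)).fun_pow 2).div_const 2).congr_deriv ?_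
    ring
  have hlog : HasDerivAt (fun t => ∑ j ∈ univ.erase i, Real.log (t - x j))
      (∑ j ∈ univ.erase i, 1 / (x i - x j)) (x i) :=
    HasDerivAt.fun_sum fun j hj =>
      ((hasDerivAt_id (x i)).sub_const (x j)).log (sub_ne_zero.2 (hx.ne (ne_of_mem_erase hj).symm))
  simp only [stepPotential, sum_apply_update_of_mem (mem_univ i) (fun k y => (y - c k) ^ 2 / 2),
    pairLogEnergy_update]
  refine ((hsq.add_const _).sub
    (((hlog.const_mul 2).add_const _).const_mul (κ / 2))).congr_deriv ?_
  ring

theorem continuousOn_stepPotential (κ : ℝ) (c : ι → ℝ) :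
    ContinuousOn (stepPotential κ c) {x | Injective x} := by
  refine ContinuousOn.sub (by fun_prop) (continuousOn_const.mul
    (continuousOn_finsetSum _ fun i _ => continuousOn_finsetSum _ fun j hj => ?_))
  exact ContinuousOn.log (by fun_prop) fun x hx =>
    sub_ne_zero.2 (hx.ne (ne_of_mem_erase hj).symm)

theorem sum_erase_abs_add_abs_le (x : ι → ℝ) :
    ∑ k, ∑ j ∈ univ.erase k, (|x k| + |x j|) ≤ 2 * Fintype.card ι * ∑ i, |x i| := by
  calc ∑ k, ∑ j ∈ univ.erase k, (|x k| + |x j|) ≤ ∑ k, ∑ j, (|x k| + |x j|) :=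
        sum_le_sum fun k _ => sum_le_sum_of_subset_of_nonneg (erase_subset k univ)
          fun j _ _ => by positivity
    _ = 2 * Fintype.card ι * ∑ i, |x i| := by
        simp only [sum_add_distrib, sum_const, card_univ, nsmul_eq_mul, ← mul_sum]
        ring

theorem pairLogEnergy_le (x : ι → ℝ) :
    pairLogEnergy x ≤ 2 * Fintype.card ι * ∑ i, |x i| :=
  (sum_le_sum fun k _ => sum_le_sum fun j _ => Real.log_sub_le_abs_add_abs (x k) (x j)).trans
    (sum_erase_abs_add_abs_le x)

theorem pairLogEnergy_le_log_sub_add (x : ι → ℝ) {p q : ι} (hpq : p ≠ q) :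
    pairLogEnergy x ≤ Real.log (x q - x p) + 4 * Fintype.card ι * ∑ i, |x i| := by
  set g : ι → ℝ := fun k => ∑ j ∈ univ.erase k, (|x k| + |x j|)
  have hg : ∀ k ∈ univ, 0 ≤ g k := fun k _ => by positivity
  have hrow : ∀ k ∈ univ, ∑ j ∈ univ.erase k, Real.log (x k - x j) ≤ g k :=
    fun k _ => sum_le_sum fun j _ => Real.log_sub_le_abs_add_abs (x k) (x j)
  have hq : ∑ j ∈ univ.erase q, Real.log (x q - x j) ≤ Real.log (x q - x p) + g q :=
    sum_le_add_sum_of_le (mem_erase.2 ⟨hpq, mem_univ p⟩)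
      (fun j _ => Real.log_sub_le_abs_add_abs (x q) (x j)) fun j _ => by positivity
  have hL := sum_le_add_sum_of_le (mem_univ q) hrow hg
  have hgq := single_le_sum hg (mem_univ q)
  have hgsum := sum_erase_abs_add_abs_le x
  rw [pairLogEnergy]
  linarith

theorem sum_sub_le_stepPotential {κ : ℝ} (hκ : 0 ≤ κ) (c x : ι → ℝ) {r : ℝ}
    (hL : pairLogEnergy x ≤ r + 4 * Fintype.card ι * ∑ i, |x i|) :
    ∑ i, (x i ^ 2 / 2 - (‖c‖ + 2 * κ * Fintype.card ι) * |x i|) - κ / 2 * r ≤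
      stepPotential κ c x := by
  have hquad : ∑ i, (x i ^ 2 / 2 - ‖c‖ * |x i|) ≤ ∑ i, (x i - c i) ^ 2 / 2 := by
    refine sum_le_sum fun i _ => ?_
    have hc : c i * x i ≤ ‖c‖ * |x i| :=
      calc c i * x i ≤ |c i| * |x i| := by rw [← abs_mul]; exact le_abs_self _
        _ ≤ ‖c‖ * |x i| := by
          gcongr; exact (Real.norm_eq_abs (c i)).symm.trans_le (norm_le_pi_norm c i)
    nlinarith [sq_nonneg (c i)]
  have hsplit : ∑ i, (x i ^ 2 / 2 - (‖c‖ + 2 * κ * Fintype.card ι) * |x i|) =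
      ∑ i, (x i ^ 2 / 2 - ‖c‖ * |x i|) - 2 * κ * Fintype.card ι * ∑ i, |x i| := by
    rw [mul_sum, ← sum_sub_distrib]
    exact sum_congr rfl fun i _ => by ring
  have := mul_le_mul_of_nonneg_left hL (by linarith : 0 ≤ κ / 2)
  rw [stepPotential, hsplit]
  linarith

theorem neg_sq_div_two_le (a t : ℝ) : -(a ^ 2 / 2) ≤ t ^ 2 / 2 - a * |t| := by
  nlinarith [sq_nonneg (|t| - a), sq_abs t]

theorem exists_abs_le_of_stepPotential_le {κ : ℝ} (hκ : 0 ≤ κ) (c : ι → ℝ) (B : ℝ) :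
    ∃ R, ∀ x, stepPotential κ c x ≤ B → ∀ k, |x k| ≤ R := by
  set a := ‖c‖ + 2 * κ * Fintype.card ι with ha_def
  have ha : 0 ≤ a := by positivity
  have hC : 0 ≤ Fintype.card ι * (a ^ 2 / 2) := by positivity
  refine ⟨2 * a + 2 + |B| + Fintype.card ι * (a ^ 2 / 2), fun x hx k => ?_⟩
  have hL : pairLogEnergy x ≤ 0 + 4 * Fintype.card ι * ∑ i, |x i| := by
    have h0 : 0 ≤ (Fintype.card ι : ℝ) * ∑ i, |x i| := by positivity
    linarith [pairLogEnergy_le x]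
  have hΦ := sum_sub_le_stepPotential hκ c x hL
  rw [← ha_def, mul_zero, sub_zero] at hΦ
  have hk := single_le_sum (f := fun i => x i ^ 2 / 2 - a * |x i| + a ^ 2 / 2)
    (fun i _ => by linarith [neg_sq_div_two_le a (x i)]) (mem_univ k)
  simp only [sum_add_distrib, sum_const, card_univ, nsmul_eq_mul] at hk
  by_contra! hR
  have hr : 1 < |x k| / 2 - a := by linarith [abs_nonneg B]
  have hgrow := mul_lt_mul_of_pos_left hr (by linarith : 0 < |x k|)
  nlinarith [sq_abs (x k), le_abs_self B, sq_nonneg a]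

theorem exists_le_sub_of_stepPotential_le {κ : ℝ} (hκ : 0 < κ) (c : ι → ℝ) (B : ℝ) :
    ∃ ε > 0, ∀ x, stepPotential κ c x ≤ B → ∀ p q, x p < x q → ε ≤ x q - x p := by
  set a := ‖c‖ + 2 * κ * Fintype.card ι with ha_def
  set E := 2 / κ * (|B| + Fintype.card ι * (a ^ 2 / 2) + 1)
  refine ⟨Real.exp (-E), Real.exp_pos _, fun x hx p q hpq => ?_⟩
  have hΦ := sum_sub_le_stepPotential hκ.le c x
    (pairLogEnergy_le_log_sub_add x (ne_of_apply_ne x hpq.ne))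
  rw [← ha_def] at hΦ
  have hsum : ∑ i, -(a ^ 2 / 2) ≤ ∑ i, (x i ^ 2 / 2 - a * |x i|) :=
    sum_le_sum fun i _ => neg_sq_div_two_le a (x i)
  simp only [sum_neg_distrib, sum_const, card_univ, nsmul_eq_mul] at hsum
  by_contra! hε
  have hlog : Real.log (x q - x p) < -E := by
    rw [← Real.log_exp (-E)]
    exact Real.log_lt_log (sub_pos.2 hpq) hε
  have hκE : κ / 2 * E = |B| + Fintype.card ι * (a ^ 2 / 2) + 1 := by
    simp only [E]
    field_simp
  linarith [mul_lt_mul_of_pos_left hlog (half_pos hκ), le_abs_self B]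

theorem exists_isMinOn_stepPotential [LinearOrder ι] {κ : ℝ} (hκ : 0 < κ) (c : ι → ℝ) :
    ∃ x, StrictMono x ∧ IsMinOn (stepPotential κ c) {x | StrictMono x} x := by
  set x₀ : ι → ℝ := fun i => (Fintype.orderIsoFinOfCardEq ι rfl).symm i
  have hx₀ : StrictMono x₀ :=
    Nat.strictMono_cast.comp (Fin.val_strictMono.comp (OrderIso.strictMono _))
  obtain ⟨R, hR⟩ := exists_abs_le_of_stepPotential_le hκ.le c (stepPotential κ c x₀)
  obtain ⟨ε, hε, hgap⟩ := exists_le_sub_of_stepPotential_le hκ c (stepPotential κ c x₀)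
  set K := Set.univ.pi (fun _ : ι => Set.Icc (-R) R) ∩
    {x : ι → ℝ | ∀ p q, p < q → ε ≤ x q - x p}
  have hKU : K ⊆ {x | StrictMono x} := fun x hx p q hpq => by linarith [hx.2 p q hpq]
  have hK : IsCompact K :=
    (isCompact_univ_pi fun _ => isCompact_Icc).inter_right (isClosed_setOf_forall_le_sub ε)
  obtain ⟨x, hxK, hmin⟩ := exists_isMinOn_of_sublevel_subset (U := {x | StrictMono x}) hK
    ((continuousOn_stepPotential κ c).mono fun x hx => (hKU hx).injective) hx₀
    fun x hx hle => ⟨fun k _ => abs_le.1 (hR x hle k), fun p q hpq => hgap x hle p q (hx hpq)⟩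
  exact ⟨x, hKU hxK, hmin⟩

theorem exists_strictMono_solution [LinearOrder ι] {κ : ℝ} (hκ : 0 < κ) (c : ι → ℝ) :
    ∃ x : ι → ℝ, StrictMono x ∧ ∀ i, x i - κ * ∑ j ∈ univ.erase i, 1 / (x i - x j) = c i := by
  obtain ⟨x, hx, hmin⟩ := exists_isMinOn_stepPotential hκ c
  have hloc := hmin.isLocalMin (isOpen_setOf_strictMono.mem_nhds hx)
  refine ⟨x, hx, fun i => ?_⟩
  have := hloc.hasDerivAt_update_eq_zero i (hasDerivAt_stepPotential_update κ c hx.injective i)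
  linarith

theorem le_of_solution_le [LinearOrder ι] {κ : ℝ} (hκ : 0 ≤ κ) {c c' x y : ι → ℝ}
    (hx : StrictMono x) (hy : StrictMono y) (hc : c ≤ c')
    (hxc : ∀ i, x i - κ * ∑ j ∈ univ.erase i, 1 / (x i - x j) = c i)
    (hyc : ∀ i, y i - κ * ∑ j ∈ univ.erase i, 1 / (y i - y j) = c' i) :
    x ≤ y := by
  intro k
  have : Nonempty ι := ⟨k⟩
  obtain ⟨i, hi⟩ := Finite.exists_max fun k => x k - y k
  have hsum : ∑ j ∈ univ.erase i, 1 / (x i - x j) ≤ ∑ j ∈ univ.erase i, 1 / (y i - y j) :=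
    sum_le_sum fun j hj => one_div_sub_le_one_div_sub hx hy (ne_of_mem_erase hj) (hi j)
  have := mul_le_mul_of_nonneg_left hsum hκ
  linarith [hi k, hxc i, hyc i, hc i]

end Potential

theorem semi_implicit_step_exists_unique_general (d : ℕ)
    (lam h : ℝ) (hlam : 0 < lam) (hh : 0 < h) (c : Fin d → ℝ) :
    ∃! x : Fin d → ℝ, StrictMono x ∧
      ∀ i : Fin d,
        x i - h * lam * ∑ j ∈ Finset.univ.filter (fun j => j ≠ i), 1 / (x i - x j)
          = c i := by
  have hκ : 0 < h * lam := mul_pos hh hlam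
  simp only [filter_ne']
  obtain ⟨x, hx, hxc⟩ := exists_strictMono_solution hκ c
  refine ⟨x, ⟨hx, hxc⟩, fun y ⟨hy, hyc⟩ => le_antisymm ?_ ?_⟩
  · exact le_of_solution_le hκ.le hy hx le_rfl hyc hxc
  · exact le_of_solution_le hκ.le hx hy le_rfl hxc hyc

/-- Let `d ≥ 2`, `λ > 0`, `h > 0`, `c ∈ ℝ^d`.  Then there exists a unique
`x ∈ Δ_d` (strictly increasing coordinates) such that for every `i`,
`x_i − h·λ·∑_{j ≠ i} 1/(x_i − x_j) = c_i`; i.e. each implicit Euler–Maruyama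
step is well defined and takes values in `Δ_d`. -/
theorem semi_implicit_step_exists_unique (d : ℕ) (hd : 2 ≤ d)
    (lam h : ℝ) (hlam : 0 < lam) (hh : 0 < h) (c : Fin d → ℝ) :
    ∃! x : Fin d → ℝ, StrictMono x ∧
      ∀ i : Fin d,
        x i - h * lam * ∑ j ∈ Finset.univ.filter (fun j => j ≠ i), 1 / (x i - x j)
          = c i :=
  semi_implicit_step_exists_unique_general d lam h hlam hh c
end
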